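/- Let V be a simple finite-dimensional left H-module and let β_V : V ⊗_k V* → H* be the k-linear map determined by β_V(v ⊗ f)(h) = f(h·v). Then the kernel of β_V equals the k-linear span of the elements (d v) ⊗ f − v ⊗ (f ∘ d), where d ranges over End_H(V), v over V, and f over V*. In particular, if End_H(V) = k·id then β_V is injective. -/

import Mathlib

/-
Let `D = End_H(V)`, a division ring by Schur's lemma, and let `(bᵢ)` be a `D`-basis of `V`.
The balancing relations `(d v) ⊗ f ≡ v ⊗ (f ∘ d)` lie in `ker β_V` since `d` is `H`-linear, and
modulo them every tensor becomes `∑ bᵢ ⊗ fᵢ`. If `β_V (∑ bᵢ ⊗ fᵢ) = 0`, i.e. `∑ fᵢ (h • bᵢ) = 0`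
for all `h`, Jacobson density provides, for any `i₀` and `w`, an `h` with `h • b_{i₀} = w` and
`h • bᵢ = 0` for the other (finitely many) relevant `i`; hence `f_{i₀} w = 0`.
-/
noncomputable section

/-- The action of `H` on `v`, as a `k`-linear map `H →ₗ[k] V`. -/
def actOn (k H V : Type*) [Field k] [Ring H] [Algebra k H]
    [AddCommGroup V] [Module k V] [Module H V] [IsScalarTower k H V] (v : V) :
    H →ₗ[k] V where
  toFun h := h • v
  map_add' h h' := add_smul h h' v
  map_smul' c h := by simpa using smul_assoc c h v


/-- The map `β_V : V ⊗ V* → H*` determined by `β_V (v ⊗ f) h = f (h • v)`. -/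
def betaV (k H V : Type*) [Field k] [Ring H] [Algebra k H]
    [AddCommGroup V] [Module k V] [Module H V] [IsScalarTower k H V]
    [SMulCommClass H k V] :
    TensorProduct k V (V →ₗ[k] k) →ₗ[k] (H →ₗ[k] k) :=
  TensorProduct.lift
    (LinearMap.mk₂ k (fun v f => f ∘ₗ actOn k H V v)
      (fun v v' f => by ext h; simp [actOn, smul_add])
      (fun c v f => by ext h; simp [actOn, smul_comm h c])
      (fun v f f' => by ext h; simp [actOn])
      (fun c v f => by ext h; simp [actOn]))

open scoped TensorProduct

theorem LinearMap.ker_eq_of_sup_range_eq_top {R M N P : Type*} [Semiring R]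
    [AddCommMonoid M] [AddCommMonoid N] [AddCommMonoid P] [Module R M] [Module R N] [Module R P]
    {β : M →ₗ[R] N} {S : Submodule R M} {Φ : P →ₗ[R] M} (hS : S ≤ ker β)
    (hsup : S ⊔ range Φ = ⊤) (hinj : Function.Injective (β ∘ₗ Φ)) : ker β = S := by
  refine le_antisymm (fun x hx => ?_) hS
  obtain ⟨s, hs, _, ⟨p, rfl⟩, rfl⟩ :=
    Submodule.mem_sup.mp (hsup ▸ Submodule.mem_top : x ∈ S ⊔ range Φ)
  have hp : β (Φ p) = 0 := by
    rwa [mem_ker, map_add, mem_ker.mp (hS hs), zero_add] at hx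
  rw [show p = 0 from hinj (by simpa using hp), map_zero, add_zero]
  exact hs

theorem Module.Basis.exists_smul_eq {R M ι : Type*} [Ring R] [AddCommGroup M] [Module R M]
    [IsSemisimpleModule R M] (b : Module.Basis ι (Module.End R M) M) (w : ι → M)
    (s : Finset ι) :
    ∃ r : R, ∀ i ∈ s, r • b i = w i := by
  classical
  obtain ⟨r, hr⟩ := jacobson_density (b.constr ℕ w) (s.image b)
  exact ⟨r, fun i hi => by rw [← hr _ (Finset.mem_image_of_mem b hi), b.constr_basis]⟩

section

variable (k H V : Type*) [Field k] [Ring H] [Algebra k H]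
    [AddCommGroup V] [Module k V] [Module H V] [IsScalarTower k H V]

/-- The kernel of the canonical surjection `V ⊗[k] V* → V ⊗[End_H V] V*`. -/
def balancingSubmodule : Submodule k (V ⊗[k] (V →ₗ[k] k)) :=
  Submodule.span k {x | ∃ (d : V →ₗ[H] V) (v : V) (f : V →ₗ[k] k),
    x = (d v) ⊗ₜ[k] f - v ⊗ₜ[k] (f ∘ₗ (d.restrictScalars k))}

variable {k H V}

lemma sub_mem_balancingSubmodule (d : V →ₗ[H] V) (v : V) (f : V →ₗ[k] k) :
    (d v) ⊗ₜ[k] f - v ⊗ₜ[k] (f ∘ₗ (d.restrictScalars k)) ∈ balancingSubmodule k H V :=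
  Submodule.subset_span ⟨d, v, f, rfl⟩

def sumTmul {ι : Type*} (b : ι → V) : (ι →₀ (V →ₗ[k] k)) →ₗ[k] V ⊗[k] (V →ₗ[k] k) :=
  Finsupp.lsum k fun i => TensorProduct.mk k V (V →ₗ[k] k) (b i)

lemma balancingSubmodule_sup_range_eq_top {ι : Type*} {b : ι → V}
    (hb : Submodule.span (Module.End H V) (Set.range b) = ⊤) :
    balancingSubmodule k H V ⊔ LinearMap.range (sumTmul (k := k) b) = ⊤ := by
  set P := balancingSubmodule k H V ⊔ LinearMap.range (sumTmul (k := k) b)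
  suffices h : ∀ v : V, ∀ f, v ⊗ₜ[k] f ∈ P by
    rw [eq_top_iff, ← TensorProduct.span_tmul_eq_top, Submodule.span_le]
    rintro _ ⟨v, f, rfl⟩
    exact h v f
  intro v
  induction (hb ▸ Submodule.mem_top : v ∈ Submodule.span _ (Set.range b)) using
    Submodule.span_induction with
  | mem _ hv =>
    obtain ⟨i, rfl⟩ := hv
    exact fun f => Submodule.mem_sup_right ⟨Finsupp.single i f, by simp [sumTmul]⟩
  | zero => simp
  | add _ _ _ _ hv hw =>
    intro f
    rw [TensorProduct.add_tmul]
    exact P.add_mem (hv f) (hw f)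
  | smul d v _ hv =>
    intro f
    rw [← sub_add_cancel ((d • v) ⊗ₜ[k] f) (v ⊗ₜ[k] (f ∘ₗ d.restrictScalars k))]
    exact P.add_mem (Submodule.mem_sup_left (sub_mem_balancingSubmodule d v f)) (hv _)

variable [SMulCommClass H k V]

@[simp]
lemma betaV_tmul (v : V) (f : V →ₗ[k] k) (h : H) :
    betaV k H V (v ⊗ₜ[k] f) h = f (h • v) := rfl

variable (k H V)

lemma balancingSubmodule_le_ker_betaV :
    balancingSubmodule k H V ≤ LinearMap.ker (betaV k H V) := by
  refine Submodule.span_le.mpr ?_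
  rintro _ ⟨d, v, f, rfl⟩
  ext h
  simp [d.map_smul]

variable {k H V}

lemma betaV_sumTmul_apply {ι : Type*} (b : ι → V) (g : ι →₀ (V →ₗ[k] k)) (h : H) :
    betaV k H V (sumTmul b g) h = g.sum fun i f => f (h • b i) := by
  simp [sumTmul, Finsupp.lsum_apply, Finsupp.sum]

lemma injective_betaV_comp_sumTmul [IsSemisimpleModule H V] {ι : Type*}
    (b : Module.Basis ι (Module.End H V) V) :
    Function.Injective (betaV k H V ∘ₗ sumTmul (k := k) b) := by
  classical
  refine (injective_iff_map_eq_zero _).mpr fun g hg => ?_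
  ext i₀ w
  obtain ⟨h, hh⟩ := Module.Basis.exists_smul_eq b (Pi.single i₀ w) (insert i₀ g.support)
  have hgh := LinearMap.congr_fun hg h
  rwa [LinearMap.comp_apply, betaV_sumTmul_apply, Finsupp.sum_eq_single i₀,
    hh i₀ (Finset.mem_insert_self ..), Pi.single_eq_same] at hgh
  · intro i hi hne
    rw [hh i (Finset.mem_insert_of_mem (Finsupp.mem_support_iff.mpr hi)),
      Pi.single_eq_of_ne hne, map_zero]
  · simp

variable (k H V)

theorem ker_betaV [IsSimpleModule H V] :
    LinearMap.ker (betaV k H V) = balancingSubmodule k H V := by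
  classical
  let b := Module.Basis.ofVectorSpace (Module.End H V) V
  have hsup := balancingSubmodule_sup_range_eq_top (k := k) b.span_eq
  have hinj := injective_betaV_comp_sumTmul (k := k) b
  exact LinearMap.ker_eq_of_sup_range_eq_top (balancingSubmodule_le_ker_betaV k H V) hsup hinj

end

open scoped TensorProduct in
theorem stmt3_general (k H V : Type*) [Field k] [Ring H] [Algebra k H]
    [AddCommGroup V] [Module k V] [Module H V] [IsScalarTower k H V]
    [SMulCommClass H k V] [IsSimpleModule H V] :
    LinearMap.ker (betaV k H V) =
      Submodule.span k {x : V ⊗[k] (V →ₗ[k] k) |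
        ∃ (d : V →ₗ[H] V) (v : V) (f : V →ₗ[k] k),
          x = (d v) ⊗ₜ[k] f - v ⊗ₜ[k] (f ∘ₗ (d.restrictScalars k))} ∧
    ((∀ d : V →ₗ[H] V, ∃ c : k, ∀ v : V, d v = c • v) →
      Function.Injective (betaV k H V)) := by
  refine ⟨ker_betaV k H V, fun hscalar => ?_⟩
  rw [← LinearMap.ker_eq_bot, ker_betaV, balancingSubmodule, Submodule.span_eq_bot]
  rintro _ ⟨d, v, f, rfl⟩
  obtain ⟨c, hc⟩ := hscalar d
  have hdual : f ∘ₗ d.restrictScalars k = c • f := by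
    ext u
    simp [hc u]
  rw [hc, hdual, TensorProduct.smul_tmul, sub_self]

open scoped TensorProduct in
/-- the kernel of `β_V` is spanned by the elements
`(d v) ⊗ f − v ⊗ (f ∘ d)`, `d ∈ End_H(V)`; in particular `β_V` is injective if
`End_H(V) = k·id`. -/
theorem stmt3 (k H V : Type*) [Field k] [Ring H] [Algebra k H]
    [AddCommGroup V] [Module k V] [Module H V] [IsScalarTower k H V]
    [SMulCommClass H k V] [FiniteDimensional k V] [IsSimpleModule H V] :
    LinearMap.ker (betaV k H V) =
      Submodule.span k {x : V ⊗[k] (V →ₗ[k] k) |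
        ∃ (d : V →ₗ[H] V) (v : V) (f : V →ₗ[k] k),
          x = (d v) ⊗ₜ[k] f - v ⊗ₜ[k] (f ∘ₗ (d.restrictScalars k))} ∧
    ((∀ d : V →ₗ[H] V, ∃ c : k, ∀ v : V, d v = c • v) →
      Function.Injective (betaV k H V)) :=
  stmt3_general k H V
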